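/- Let a finite DTMDP with uniformisation rate q > 0, time bound t ≥ 0, reward structure (c, f) and precision ε > 0 be given, and let k ∈ ℕ be ε-sufficient. Then the maximising value-iteration vector q'_0 satisfies, for every state s0, |q'_0(s0) − sup_{σ ∈ HR} V(σ, s0)| < ε. -/

import Mathlib

/-!
Along the transient distributions `p_i` of an HR scheduler, the recursion of `q'` telescopes:
the expected reward `Σ_{i ≤ k} E_{p_i}[φ(i)·f + ψ(i)·c/q]` of the first `k + 1` steps equals
`q'_0(s0)` minus a sum of gaps `E_{p_i}[max_a P_a q'_{i+1}] − E_{p_{i+1}}[q'_{i+1}]`. Each gap is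
nonnegative because the scheduler averages over enabled actions where `q'` maximises, and it
vanishes for the counting deterministic scheduler that always picks a maximising action.
The remaining terms of the series are nonnegative and add up to at most
`ψ(k)·max f + (qt − Σ_{n ≤ k} ψ(n))·max c/q`, because `Σ_n ψ_{qt}(n) ≤ qt` (the Poisson mean);
`ε`-sufficiency makes this truncation error smaller than `ε`.
-/

open scoped BigOperators

namespace TR

variable {S A : Type} [Fintype S] [Fintype A] [DecidableEq S] [DecidableEq A]

/-- Poisson probabilities `φ_λ(i) = λ^i/i! · e^{−λ}`. -/
noncomputable def phi (lam : ℝ) (i : ℕ) : ℝ :=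
  lam ^ i / (Nat.factorial i : ℝ) * Real.exp (-lam)

/-- `ψ_λ(i) = 1 − Σ_{j=0}^{i} φ_λ(j)`. -/
noncomputable def psi (lam : ℝ) (i : ℕ) : ℝ :=
  1 - ∑ j ∈ Finset.range (i + 1), phi lam j

/-- Action `a` is enabled in state `s`. -/
def Enabled (P : S → A → S → ℝ) (s : S) (a : A) : Prop :=
  ∑ s', P s a s' = 1

/-- `P` is the transition function of a finite DTMDP. -/
def IsDTMDP (P : S → A → S → ℝ) : Prop :=
  (∀ s a s', 0 ≤ P s a s') ∧
  (∀ s a, (∑ s', P s a s') = 0 ∨ (∑ s', P s a s') = 1) ∧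
  (∀ s, ∃ a, Enabled P s a)

/-- History-dependent randomised scheduler.  A history is encoded as a pair of
a list of (state, action) pairs (most recent first) and the current state. -/
def IsHR (P : S → A → S → ℝ) (sch : List (S × A) × S → A → ℝ) : Prop :=
  (∀ h a, 0 ≤ sch h a) ∧ (∀ h, ∑ a, sch h a = 1) ∧
  (∀ h a, 0 < sch h a → Enabled P h.2 a)

/-- Probability of the path recorded in the given history (of length `n`,
starting at `s0`) under the HR scheduler `sch`. -/
noncomputable def hrHistProb (P : S → A → S → ℝ) (sch : List (S × A) × S → A → ℝ)
    (s0 : S) : ℕ → List (S × A) × S → ℝ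
  | 0, h => if h.1 = [] ∧ h.2 = s0 then 1 else 0
  | _ + 1, ([], _) => 0
  | n + 1, ((s, a) :: rest, s') =>
      hrHistProb P sch s0 n (rest, s) * sch (rest, s) a * P s a s'

/-- Transient probability `tprob^σ(s0, n, s)`: total probability of all paths of
length `n` from `s0` ending in `s`. -/
noncomputable def hrProb (P : S → A → S → ℝ) (sch : List (S × A) × S → A → ℝ)
    (s0 : S) (n : ℕ) (s : S) : ℝ :=
  ∑' l : List (S × A), hrHistProb P sch s0 n (l, s)

/-- Counting randomised scheduler. -/
def IsCR (P : S → A → S → ℝ) (sch : S → ℕ → A → ℝ) : Prop :=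
  (∀ s n a, 0 ≤ sch s n a) ∧ (∀ s n, ∑ a, sch s n a = 1) ∧
  (∀ s n a, 0 < sch s n a → Enabled P s a)

/-- Transient distribution of a CR scheduler. -/
noncomputable def crProb (P : S → A → S → ℝ) (sch : S → ℕ → A → ℝ) (s0 : S) :
    ℕ → S → ℝ
  | 0 => fun s => if s = s0 then 1 else 0
  | n + 1 => fun s' => ∑ s, crProb P sch s0 n s * ∑ a, sch s n a * P s a s'

/-- Counting deterministic scheduler. -/
def IsCD (P : S → A → S → ℝ) (d : S → ℕ → A) : Prop :=
  ∀ s n, Enabled P s (d s n)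

/-- Transient distribution of a CD scheduler. -/
noncomputable def cdProb (P : S → A → S → ℝ) (d : S → ℕ → A) (s0 : S) :
    ℕ → S → ℝ
  | 0 => fun s => if s = s0 then 1 else 0
  | n + 1 => fun s' => ∑ s, cdProb P d s0 n s * P s (d s n) s'

/-- The value `V = Σ_i [ φ_{qt}(i)·Σ_s p_i(s)·f(s) + ψ_{qt}(i)·Σ_s p_i(s)·c(s)/q ]`
of transient distributions `p` w.r.t. uniformisation rate `q`, time bound `t`
and rewards `(c, f)`. -/
noncomputable def value (q t : ℝ) (c f : S → ℝ) (p : ℕ → S → ℝ) : ℝ :=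
  ∑' i : ℕ, (phi (q * t) i * ∑ s, p i s * f s
    + psi (q * t) i * ∑ s, p i s * (c s / q))

/-- Value-iteration vectors of a CR scheduler: `crVI … k j` is `q_{k+1-j}`,
i.e. `crVI … k 0 = q_{k+1} ≡ 0` and `crVI … k (k+1) = q_0`. -/
noncomputable def crVI (P : S → A → S → ℝ) (sch : S → ℕ → A → ℝ)
    (q t : ℝ) (c f : S → ℝ) (k : ℕ) : ℕ → S → ℝ
  | 0 => fun _ => 0
  | j + 1 => fun s =>
      (∑ a, sch s (k - j) a * ∑ s', P s a s' * crVI P sch q t c f k j s')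
      + phi (q * t) (k - j) * f s + psi (q * t) (k - j) * (c s / q)

/-- Maximising value-iteration vectors: `maxVI … k j` is `q'_{k+1-j}`,
i.e. `maxVI … k 0 = q'_{k+1} ≡ 0` and `maxVI … k (k+1) = q'_0`. -/
noncomputable def maxVI (P : S → A → S → ℝ)
    (q t : ℝ) (c f : S → ℝ) (k : ℕ) : ℕ → S → ℝ
  | 0 => fun _ => 0
  | j + 1 => fun s =>
      sSup {x : ℝ | ∃ a, Enabled P s a ∧
        x = ∑ s', P s a s' * maxVI P q t c f k j s'}
      + phi (q * t) (k - j) * f s + psi (q * t) (k - j) * (c s / q)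

/-- Maximum of a real-valued function on a finite nonempty type. -/
noncomputable def maxOf [Nonempty S] (g : S → ℝ) : ℝ :=
  Finset.univ.sup' Finset.univ_nonempty g

/-- `k` is `ε`-sufficient: `Σ_{n=0}^{k} ψ_{qt}(n) > qt − ε·q/(2·max_s c(s))`
(dropped if `max_s c(s) = 0`) and `ψ_{qt}(k)·max_s f(s) < ε/2`. -/
def EpsSufficient [Nonempty S] (q t : ℝ) (c f : S → ℝ) (ε : ℝ) (k : ℕ) : Prop :=
  (maxOf c = 0 ∨
    (∑ n ∈ Finset.range (k + 1), psi (q * t) n) > q * t - ε * q / (2 * maxOf c)) ∧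
  psi (q * t) k * maxOf f < ε / 2

/-- `n`-step transition probabilities (matrix powers) of a stochastic matrix. -/
noncomputable def matPow (P : S → S → ℝ) : ℕ → S → S → ℝ
  | 0 => fun s s' => if s = s' then 1 else 0
  | n + 1 => fun s s' => ∑ s'', matPow P n s s'' * P s'' s'

/-- `part` is a partition of the finite state set `S`. -/
def IsPartition (part : Finset (Finset S)) : Prop :=
  (∀ z ∈ part, z.Nonempty) ∧ (∀ s : S, ∃ z ∈ part, s ∈ z) ∧
  (∀ z ∈ part, ∀ z' ∈ part, z ≠ z' → Disjoint z z')

/-- Abstraction DTMDP of a stochastic matrix w.r.t. a partition: states are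
blocks, actions are concrete states, `P̄(z, s, z') = Σ_{s' ∈ z'} P(s,s')` if
`s ∈ z` and `0` otherwise. -/
noncomputable def abst (P : S → S → ℝ) (part : Finset (Finset S)) :
    {z // z ∈ part} → S → {z // z ∈ part} → ℝ :=
  fun z s z' => if s ∈ z.1 then ∑ s' ∈ z'.1, P s s' else 0

end TR

namespace TR

open Finset

theorem tsum_le_sum_range_add_tsum_nat_add {u w : ℕ → ℝ} (hu : ∀ i, 0 ≤ u i)
    (huw : ∀ i, u i ≤ w i) (hw : Summable w) (n : ℕ) :
    ∑' i, u i ≤ ∑ i ∈ range n, u i + ∑' i, w (i + n) := by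
  have hus : Summable u := hw.of_nonneg_of_le hu huw
  rw [← hus.sum_add_tsum_nat_add n]
  exact add_le_add_right (Summable.tsum_le_tsum (fun i => huw _)
    ((summable_nat_add_iff n).2 hus) ((summable_nat_add_iff n).2 hw)) _

section Poisson

variable {lam : ℝ}

theorem phi_nonneg (h : 0 ≤ lam) (i : ℕ) : 0 ≤ phi lam i := by
  unfold phi
  positivity

theorem hasSum_phi (lam : ℝ) : HasSum (phi lam) 1 := by
  have := ((NormedSpace.expSeries_div_hasSum_exp lam).mul_right (Real.exp (-lam)))
  rwa [← Real.exp_eq_exp_ℝ, ← Real.exp_add, add_neg_cancel, Real.exp_zero] at this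

theorem succ_mul_phi_succ (i : ℕ) : ((i : ℝ) + 1) * phi lam (i + 1) = lam * phi lam i := by
  simp only [phi, Nat.factorial_succ, Nat.cast_mul, pow_succ]
  field_simp
  push_cast
  ring

theorem psi_eq_tsum (lam : ℝ) (i : ℕ) : psi lam i = ∑' n, phi lam (n + (i + 1)) := by
  rw [psi, ← (hasSum_phi lam).tsum_eq, ← (hasSum_phi lam).summable.sum_add_tsum_nat_add (i + 1)]
  ring

theorem psi_nonneg (h : 0 ≤ lam) (i : ℕ) : 0 ≤ psi lam i := by
  rw [psi_eq_tsum]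
  exact tsum_nonneg fun n => phi_nonneg h _

theorem psi_succ (i : ℕ) : psi lam (i + 1) = psi lam i - phi lam (i + 1) := by
  rw [psi, psi, sum_range_succ]
  ring

theorem succ_mul_psi_succ_le (h : 0 ≤ lam) (N : ℕ) :
    ((N : ℝ) + 1) * psi lam (N + 1) ≤ lam * psi lam N := by
  have hsum (i : ℕ) : Summable fun n => phi lam (n + (i + 1)) :=
    (summable_nat_add_iff (i + 1)).2 (hasSum_phi lam).summable
  rw [psi_eq_tsum, psi_eq_tsum, ← tsum_mul_left, ← tsum_mul_left]
  refine Summable.tsum_le_tsum (fun n => ?_) ((hsum _).mul_left _) ((hsum _).mul_left _)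
  calc ((N : ℝ) + 1) * phi lam (n + (N + 1 + 1))
      ≤ (((n + (N + 1) : ℕ) : ℝ) + 1) * phi lam (n + (N + 1) + 1) := by
        rw [← add_assoc n]
        gcongr
        · exact phi_nonneg h _
        · linarith [(n.cast_nonneg : (0 : ℝ) ≤ n)]
    _ = lam * phi lam (n + (N + 1)) := succ_mul_phi_succ _

theorem sum_range_succ_psi (N : ℕ) :
    ∑ i ∈ range (N + 1), psi lam i = lam * (1 - psi lam N) + ((N : ℝ) + 1) * psi lam (N + 1) := by
  induction N with
  | zero =>
    have h1 := succ_mul_phi_succ (lam := lam) 0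
    simp only [psi, zero_add, sum_range_succ, Nat.cast_zero] at h1 ⊢
    linear_combination h1
  | succ n ih =>
    have h1 := succ_mul_phi_succ (lam := lam) (n + 1)
    have h2 := psi_succ (lam := lam) n
    have h3 := psi_succ (lam := lam) (n + 1)
    rw [sum_range_succ, ih]
    push_cast at h1 ⊢
    linear_combination h1 + lam * h2 - ((n : ℝ) + 2) * h3

theorem sum_range_psi_le (h : 0 ≤ lam) (N : ℕ) : ∑ i ∈ range N, psi lam i ≤ lam := by
  cases N with
  | zero => simpa using h
  | succ n =>
    rw [sum_range_succ_psi]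
    nlinarith [succ_mul_psi_succ_le h n, psi_nonneg h n]

theorem summable_psi (h : 0 ≤ lam) : Summable (psi lam) :=
  summable_of_sum_range_le (psi_nonneg h) (sum_range_psi_le h)

theorem tsum_psi_nat_add_le (h : 0 ≤ lam) (k : ℕ) :
    ∑' n, psi lam (n + k) ≤ lam - ∑ n ∈ range k, psi lam n := by
  have := (summable_psi h).sum_add_tsum_nat_add k
  linarith [Real.tsum_le_of_sum_range_le (psi_nonneg h) (sum_range_psi_le h)]

end Poisson

section Histories

def histories (S A : Type) [Fintype S] [Fintype A] : ℕ → Finset (List (S × A))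
  | 0 => {[]}
  | n + 1 => (univ ×ˢ histories S A n).map
      ⟨fun p => p.1 :: p.2, fun _ _ h => Prod.ext (List.cons.inj h).1 (List.cons.inj h).2⟩

theorem mem_histories {S A : Type} [Fintype S] [Fintype A] {l : List (S × A)} {n : ℕ} :
    l ∈ histories S A n ↔ l.length = n := by
  induction n generalizing l with
  | zero => simp [histories]
  | succ n ih =>
    rcases l with _ | ⟨x, l⟩
    · simp [histories]
    · simp only [histories, mem_map, mem_product, mem_univ, true_and, List.length_cons,
        Nat.add_right_cancel_iff]
      exact ⟨fun ⟨_, h, e⟩ => (List.cons.inj e).2 ▸ ih.1 h, fun h => ⟨(x, l), ih.2 h, rfl⟩⟩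

variable {S A : Type} [DecidableEq S] {P : S → A → S → ℝ} {sch : List (S × A) × S → A → ℝ}
  {s0 : S}

theorem hrHistProb_nonneg (hP : ∀ s a s', 0 ≤ P s a s') (hsch : ∀ h a, 0 ≤ sch h a)
    (n : ℕ) (h : List (S × A) × S) : 0 ≤ hrHistProb P sch s0 n h := by
  induction n generalizing h with
  | zero => unfold hrHistProb; positivity
  | succ n ih =>
    rcases h with ⟨_ | ⟨⟨s, a⟩, rest⟩, s'⟩
    · exact le_rfl
    · exact mul_nonneg (mul_nonneg (ih _) (hsch _ _)) (hP _ _ _)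

theorem length_eq_of_hrHistProb_ne_zero {n : ℕ} {l : List (S × A)} {s : S}
    (h : hrHistProb P sch s0 n (l, s) ≠ 0) : l.length = n := by
  induction n generalizing l s with
  | zero =>
    unfold hrHistProb at h
    grind
  | succ n ih =>
    rcases l with _ | ⟨⟨s₁, a⟩, rest⟩
    · exact absurd rfl h
    · simp only [hrHistProb, ne_eq, mul_eq_zero, not_or] at h
      simp [ih h.1.1]

variable [Fintype S] [Fintype A]

theorem hrProb_eq_sum (n : ℕ) (s : S) :
    hrProb P sch s0 n s = ∑ l ∈ histories S A n, hrHistProb P sch s0 n (l, s) :=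
  tsum_eq_sum fun _ hl =>
    not_not.1 fun h => hl (mem_histories.2 (length_eq_of_hrHistProb_ne_zero h))

theorem hrProb_zero (s : S) : hrProb P sch s0 0 s = if s = s0 then 1 else 0 := by
  rw [hrProb_eq_sum, histories, sum_singleton]
  simp [hrHistProb]

theorem hrProb_succ (n : ℕ) (s' : S) :
    hrProb P sch s0 (n + 1) s' = ∑ s, ∑ l ∈ histories S A n,
      hrHistProb P sch s0 n (l, s) * ∑ a, sch (l, s) a * P s a s' := by
  rw [hrProb_eq_sum, histories, sum_map, sum_product, Fintype.sum_prod_type]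
  simp only [mul_sum]
  refine sum_congr rfl fun s _ => ?_
  rw [sum_comm]
  exact sum_congr rfl fun _ _ => sum_congr rfl fun _ _ => by
    show hrHistProb P sch s0 n _ * sch _ _ * P _ _ _ = _
    ring

theorem hrProb_nonneg (hP : ∀ s a s', 0 ≤ P s a s') (hsch : ∀ h a, 0 ≤ sch h a) (n : ℕ)
    (s : S) : 0 ≤ hrProb P sch s0 n s := by
  rw [hrProb_eq_sum]
  exact sum_nonneg fun _ _ => hrHistProb_nonneg hP hsch _ _

theorem sum_hrProb_succ_mul (n : ℕ) (g : S → ℝ) :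
    ∑ s', hrProb P sch s0 (n + 1) s' * g s' = ∑ s, ∑ l ∈ histories S A n,
      hrHistProb P sch s0 n (l, s) * ∑ a, sch (l, s) a * ∑ s', P s a s' * g s' := by
  simp only [hrProb_succ, sum_mul, mul_sum]
  rw [sum_comm]
  refine sum_congr rfl fun s _ => ?_
  rw [sum_comm]
  refine sum_congr rfl fun l _ => ?_
  rw [sum_comm]
  exact sum_congr rfl fun a _ => sum_congr rfl fun s' _ => by ring

end Histories

section Schedulers

variable {S A : Type} [Fintype S] [Fintype A] {P : S → A → S → ℝ}

theorem sum_sched_mul_le {sch : List (S × A) × S → A → ℝ} (hsch : IsHR P sch)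
    (h : List (S × A) × S) {F : A → ℝ} {M : ℝ} (hF : ∀ a, Enabled P h.2 a → F a ≤ M) :
    ∑ a, sch h a * F a ≤ M :=
  calc ∑ a, sch h a * F a ≤ ∑ a, sch h a * M := sum_le_sum fun a _ => by
        rcases (hsch.1 h a).eq_or_lt with h0 | h0
        · rw [← h0, zero_mul, zero_mul]
        · exact mul_le_mul_of_nonneg_left (hF a (hsch.2.2 h a h0)) h0.le
    _ = M := by rw [← sum_mul, hsch.2.1 h, one_mul]

variable [DecidableEq S] {sch : List (S × A) × S → A → ℝ} {s0 : S}

theorem sum_hrProb_succ_mul_le (hP : ∀ s a s', 0 ≤ P s a s') (hsch : IsHR P sch)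
    {g G : S → ℝ} (hG : ∀ s a, Enabled P s a → ∑ s', P s a s' * g s' ≤ G s) (n : ℕ) :
    ∑ s, hrProb P sch s0 (n + 1) s * g s ≤ ∑ s, hrProb P sch s0 n s * G s := by
  rw [sum_hrProb_succ_mul]
  simp only [hrProb_eq_sum, sum_mul]
  exact sum_le_sum fun s _ => sum_le_sum fun l _ => mul_le_mul_of_nonneg_left
    (sum_sched_mul_le hsch (l, s) (hG s)) (hrHistProb_nonneg hP hsch.1 _ _)

theorem sum_hrProb_le_one (hP : ∀ s a s', 0 ≤ P s a s') (hsch : IsHR P sch) (n : ℕ) :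
    ∑ s, hrProb P sch s0 n s ≤ 1 := by
  induction n with
  | zero => simp [hrProb_zero]
  | succ n ih =>
    have := sum_hrProb_succ_mul_le (s0 := s0) hP hsch (g := fun _ => 1) (G := fun _ => 1)
      (fun s a ha => by simpa using ha.le) n
    simp only [mul_one] at this
    exact this.trans ih

end Schedulers

section CountingSchedulers

variable {S A : Type} [Fintype S] {P : S → A → S → ℝ}

theorem sum_cdProb_succ_mul [DecidableEq S] {s0 : S} (d : S → ℕ → A) (n : ℕ) (g : S → ℝ) :
    ∑ s', cdProb P d s0 (n + 1) s' * g s' =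
      ∑ s, cdProb P d s0 n s * ∑ s', P s (d s n) s' * g s' := by
  simp only [cdProb, sum_mul, mul_sum]
  rw [sum_comm]
  exact sum_congr rfl fun _ _ => sum_congr rfl fun _ _ => by ring

variable [Fintype A] [DecidableEq A]

def cdSched (d : S → ℕ → A) : List (S × A) × S → A → ℝ :=
  fun h a => if a = d h.2 h.1.length then 1 else 0

theorem isHR_cdSched {d : S → ℕ → A} (hd : IsCD P d) : IsHR P (cdSched d) := by
  refine ⟨fun h a => ?_, fun h => by simp [cdSched], fun h a ha => ?_⟩
  · unfold cdSched
    split <;> norm_num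
  · unfold cdSched at ha
    split_ifs at ha with e
    · exact e ▸ hd _ _
    · exact absurd ha (lt_irrefl 0)

theorem hrProb_cdSched [DecidableEq S] {s0 : S} (d : S → ℕ → A) :
    hrProb P (cdSched d) s0 = cdProb P d s0 := by
  funext n s'
  induction n generalizing s' with
  | zero => exact hrProb_zero s'
  | succ n ih =>
    rw [hrProb_succ, cdProb]
    refine sum_congr rfl fun s _ => ?_
    have hsel (l) (hl : l ∈ histories S A n) :
        ∑ a, cdSched d (l, s) a * P s a s' = P s (d s n) s' := by
      simp [cdSched, mem_histories.1 hl]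
    rw [sum_congr rfl fun l hl => by rw [hsel l hl], ← sum_mul, ← hrProb_eq_sum, ih]

end CountingSchedulers

section ValueIteration

variable {S A : Type} [Fintype S] {P : S → A → S → ℝ} {q t : ℝ} {c f : S → ℝ} {k : ℕ}

noncomputable def maxStep (P : S → A → S → ℝ) (g : S → ℝ) (s : S) : ℝ :=
  sSup {x : ℝ | ∃ a, Enabled P s a ∧ x = ∑ s', P s a s' * g s'}

theorem finite_enabledValues [Finite A] (g : S → ℝ) (s : S) :
    {x : ℝ | ∃ a, Enabled P s a ∧ x = ∑ s', P s a s' * g s'}.Finite :=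
  (Set.finite_range fun a => ∑ s', P s a s' * g s').subset fun _ ⟨a, _, e⟩ => ⟨a, e.symm⟩

theorem le_maxStep [Finite A] {g : S → ℝ} {s : S} {a : A} (ha : Enabled P s a) :
    ∑ s', P s a s' * g s' ≤ maxStep P g s :=
  le_csSup (finite_enabledValues g s).bddAbove ⟨a, ha, rfl⟩

theorem exists_maxStep_eq [Finite A] (g : S → ℝ) {s : S} (hs : ∃ a, Enabled P s a) :
    ∃ a, Enabled P s a ∧ ∑ s', P s a s' * g s' = maxStep P g s := by
  obtain ⟨a, ha⟩ := hs
  have hne : {x : ℝ | ∃ a, Enabled P s a ∧ x = ∑ s', P s a s' * g s'}.Nonempty := ⟨_, a, ha, rfl⟩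
  obtain ⟨b, hb, e⟩ := hne.csSup_mem (finite_enabledValues g s)
  exact ⟨b, hb, e.symm⟩

noncomputable def reward (q t : ℝ) (c f : S → ℝ) (i : ℕ) (s : S) : ℝ :=
  phi (q * t) i * f s + psi (q * t) i * (c s / q)

theorem value_eq_tsum (p : ℕ → S → ℝ) :
    value q t c f p = ∑' i, ∑ s, p i s * reward q t c f i s := by
  unfold value reward
  refine tsum_congr fun i => ?_
  simp only [mul_sum, ← sum_add_distrib]
  exact sum_congr rfl fun s _ => by ring

theorem maxVI_succ (j : ℕ) (s : S) :
    maxVI P q t c f k (j + 1) s = maxStep P (maxVI P q t c f k j) s + reward q t c f (k - j) s :=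
  add_assoc _ _ _

theorem sum_range_reward_eq (P : S → A → S → ℝ) (p : ℕ → S → ℝ) :
    ∑ i ∈ range (k + 1), ∑ s, p i s * reward q t c f i s =
      ∑ s, p 0 s * maxVI P q t c f k (k + 1) s -
        ∑ i ∈ range (k + 1), (∑ s, p i s * maxStep P (maxVI P q t c f k (k - i)) s -
          ∑ s, p (i + 1) s * maxVI P q t c f k (k - i) s) := by
  set v : ℕ → ℝ := fun i => ∑ s, p i s * maxVI P q t c f k (k + 1 - i) s
  have hv0 : v (k + 1) = 0 := by simp [v, maxVI]
  have hstep (i) (hi : i ∈ range (k + 1)) : ∑ s, p i s * reward q t c f i s =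
      (v i - v (i + 1)) - (∑ s, p i s * maxStep P (maxVI P q t c f k (k - i)) s -
        ∑ s, p (i + 1) s * maxVI P q t c f k (k - i) s) := by
    have hik : i ≤ k := Nat.lt_succ_iff.1 (mem_range.1 hi)
    simp only [v, Nat.add_sub_add_right, show k + 1 - i = k - i + 1 by omega, maxVI_succ,
      Nat.sub_sub_self hik, mul_add, sum_add_distrib]
    ring
  rw [sum_congr rfl hstep, sum_sub_distrib, sum_range_sub', hv0]
  simp [v]

end ValueIteration

section Optimality

variable {S A : Type} [Fintype S] [DecidableEq S] {P : S → A → S → ℝ} {q t : ℝ} {c f : S → ℝ}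
  {k : ℕ} {s0 : S}

theorem sum_range_reward_hrProb_le_maxVI [Fintype A] (hP : ∀ s a s', 0 ≤ P s a s')
    {sch : List (S × A) × S → A → ℝ} (hsch : IsHR P sch) :
    ∑ i ∈ range (k + 1), ∑ s, hrProb P sch s0 i s * reward q t c f i s ≤
      maxVI P q t c f k (k + 1) s0 := by
  have hgap (i : ℕ) : 0 ≤ ∑ s, hrProb P sch s0 i s * maxStep P (maxVI P q t c f k (k - i)) s -
      ∑ s, hrProb P sch s0 (i + 1) s * maxVI P q t c f k (k - i) s :=
    sub_nonneg.2 (sum_hrProb_succ_mul_le hP hsch (fun _ _ ha => le_maxStep ha) i)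
  rw [sum_range_reward_eq P]
  calc _ ≤ ∑ s, hrProb P sch s0 0 s * maxVI P q t c f k (k + 1) s :=
        sub_le_self _ (sum_nonneg fun i _ => hgap i)
    _ = _ := by simp [hrProb_zero]

theorem sum_range_reward_cdProb_eq_maxVI {d : S → ℕ → A}
    (hd : ∀ s n, ∑ s', P s (d s n) s' * maxVI P q t c f k (k - n) s' =
      maxStep P (maxVI P q t c f k (k - n)) s) :
    ∑ i ∈ range (k + 1), ∑ s, cdProb P d s0 i s * reward q t c f i s =
      maxVI P q t c f k (k + 1) s0 := by
  have hgap (i : ℕ) : ∑ s, cdProb P d s0 i s * maxStep P (maxVI P q t c f k (k - i)) s -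
      ∑ s, cdProb P d s0 (i + 1) s * maxVI P q t c f k (k - i) s = 0 := by
    rw [sum_cdProb_succ_mul, sub_eq_zero]
    simp only [hd]
  rw [sum_range_reward_eq P, sum_congr rfl fun i _ => hgap i, sum_const_zero, sub_zero]
  simp [cdProb]

end Optimality

section Truncation

variable {S : Type} [Fintype S] [Nonempty S] {q t : ℝ} {c f : S → ℝ}

theorem le_maxOf (g : S → ℝ) (s : S) : g s ≤ maxOf g :=
  le_sup' g (mem_univ s)

noncomputable def truncationError (q t : ℝ) (c f : S → ℝ) (k : ℕ) : ℝ :=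
  psi (q * t) k * maxOf f + (q * t - ∑ n ∈ range (k + 1), psi (q * t) n) * (maxOf c / q)

theorem sum_mul_reward_mem_Icc (hq : 0 < q) (ht : 0 ≤ t) (hc : ∀ s, 0 ≤ c s)
    (hf : ∀ s, 0 ≤ f s) {p : ℕ → S → ℝ} (hp0 : ∀ i s, 0 ≤ p i s) (hp1 : ∀ i, ∑ s, p i s ≤ 1)
    (i : ℕ) : ∑ s, p i s * reward q t c f i s ∈
      Set.Icc 0 (phi (q * t) i * maxOf f + psi (q * t) i * (maxOf c / q)) := by
  have hlam : 0 ≤ q * t := mul_nonneg hq.le ht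
  have hr0 (s : S) : 0 ≤ reward q t c f i s :=
    add_nonneg (mul_nonneg (phi_nonneg hlam i) (hf s))
      (mul_nonneg (psi_nonneg hlam i) (div_nonneg (hc s) hq.le))
  have hr (s : S) : reward q t c f i s ≤ phi (q * t) i * maxOf f + psi (q * t) i * (maxOf c / q) :=
    add_le_add (mul_le_mul_of_nonneg_left (le_maxOf f s) (phi_nonneg hlam i))
      (mul_le_mul_of_nonneg_left (div_le_div_of_nonneg_right (le_maxOf c s) hq.le)
        (psi_nonneg hlam i))
  refine ⟨sum_nonneg fun s _ => mul_nonneg (hp0 i s) (hr0 s), ?_⟩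
  calc ∑ s, p i s * reward q t c f i s
      ≤ ∑ s, p i s * (phi (q * t) i * maxOf f + psi (q * t) i * (maxOf c / q)) :=
        sum_le_sum fun s _ => mul_le_mul_of_nonneg_left (hr s) (hp0 i s)
    _ ≤ phi (q * t) i * maxOf f + psi (q * t) i * (maxOf c / q) := by
        rw [← sum_mul]
        exact mul_le_of_le_one_left ((hr0 _).trans (hr (Classical.arbitrary S))) (hp1 i)

theorem summable_poissonBound (hq : 0 < q) (ht : 0 ≤ t) :
    Summable fun i => phi (q * t) i * maxOf f + psi (q * t) i * (maxOf c / q) :=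
  ((hasSum_phi _).summable.mul_right _).add
    ((summable_psi (mul_nonneg hq.le ht)).mul_right _)

theorem sum_range_le_value (hq : 0 < q) (ht : 0 ≤ t) (hc : ∀ s, 0 ≤ c s)
    (hf : ∀ s, 0 ≤ f s) {p : ℕ → S → ℝ} (hp0 : ∀ i s, 0 ≤ p i s) (hp1 : ∀ i, ∑ s, p i s ≤ 1)
    (n : ℕ) : ∑ i ∈ range n, ∑ s, p i s * reward q t c f i s ≤ value q t c f p := by
  have h := sum_mul_reward_mem_Icc hq ht hc hf hp0 hp1
  rw [value_eq_tsum]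
  exact Summable.sum_le_tsum _ (fun i _ => (h i).1)
    ((summable_poissonBound hq ht).of_nonneg_of_le (fun i => (h i).1) (fun i => (h i).2))

theorem value_le_sum_range_add_truncationError (hq : 0 < q) (ht : 0 ≤ t)
    (hc : ∀ s, 0 ≤ c s) (hf : ∀ s, 0 ≤ f s) {p : ℕ → S → ℝ} (hp0 : ∀ i s, 0 ≤ p i s)
    (hp1 : ∀ i, ∑ s, p i s ≤ 1) (k : ℕ) :
    value q t c f p ≤
      ∑ i ∈ range (k + 1), ∑ s, p i s * reward q t c f i s + truncationError q t c f k := by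
  have hlam : 0 ≤ q * t := mul_nonneg hq.le ht
  have h := sum_mul_reward_mem_Icc hq ht hc hf hp0 hp1
  have hcq : 0 ≤ maxOf c / q :=
    div_nonneg ((hc _).trans (le_maxOf c (Classical.arbitrary S))) hq.le
  rw [value_eq_tsum]
  refine (tsum_le_sum_range_add_tsum_nat_add (fun i => (h i).1) (fun i => (h i).2)
    (summable_poissonBound hq ht) (k + 1)).trans (add_le_add_right ?_ _)
  have hphi := (summable_nat_add_iff (k + 1)).2 (hasSum_phi (q * t)).summable
  have hpsi := (summable_nat_add_iff (k + 1)).2 (summable_psi hlam)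
  rw [Summable.tsum_add (hphi.mul_right _) (hpsi.mul_right _), tsum_mul_right, tsum_mul_right,
    ← psi_eq_tsum, truncationError]
  gcongr
  exact tsum_psi_nat_add_le hlam (k + 1)

theorem truncationError_lt {ε : ℝ} {k : ℕ} (hq : 0 < q) (hc : ∀ s, 0 ≤ c s) (hε : 0 < ε)
    (hk : EpsSufficient q t c f ε k) : truncationError q t c f k < ε := by
  obtain ⟨hkc, hkf⟩ := hk
  rcases ((hc _).trans (le_maxOf c (Classical.arbitrary S))).eq_or_lt with h0 | hpos
  · rw [truncationError, ← h0, zero_div, mul_zero, add_zero]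
    linarith
  · have hsum := hkc.resolve_left hpos.ne'
    have hc_err : (q * t - ∑ n ∈ range (k + 1), psi (q * t) n) * (maxOf c / q) < ε / 2 :=
      calc _ < ε * q / (2 * maxOf c) * (maxOf c / q) := by gcongr; linarith
        _ = ε / 2 := by field_simp
    rw [truncationError]
    linarith

end Truncation

/-- for an ε-sufficient `k`, the maximising value-iteration vector
`q'_0` is within `ε` of the supremum of the value over HR schedulers. -/
theorem stmt1 {S A : Type} [Fintype S] [Nonempty S] [Fintype A]
    [DecidableEq S] [DecidableEq A]
    (P : S → A → S → ℝ) (hP : IsDTMDP P)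
    (q t : ℝ) (hq : 0 < q) (ht : 0 ≤ t)
    (c f : S → ℝ) (hc : ∀ s, 0 ≤ c s) (hf : ∀ s, 0 ≤ f s)
    (ε : ℝ) (hε : 0 < ε) (k : ℕ) (hk : EpsSufficient q t c f ε k) :
    ∀ s0 : S,
      |maxVI P q t c f k (k + 1) s0 -
        ⨆ sch : {sch : List (S × A) × S → A → ℝ // IsHR P sch},
          value q t c f (hrProb P sch.1 s0)| < ε := by
  intro s0
  have hHR (sch : {sch : List (S × A) × S → A → ℝ // IsHR P sch}) :=
    And.intro (hrProb_nonneg (s0 := s0) hP.1 sch.2.1) (sum_hrProb_le_one (s0 := s0) hP.1 sch.2)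
  have hupper (sch : {sch : List (S × A) × S → A → ℝ // IsHR P sch}) :
      value q t c f (hrProb P sch.1 s0) ≤
        maxVI P q t c f k (k + 1) s0 + truncationError q t c f k :=
    (value_le_sum_range_add_truncationError hq ht hc hf (hHR sch).1 (hHR sch).2 k).trans
      (add_le_add_left (sum_range_reward_hrProb_le_maxVI hP.1 sch.2) _)
  choose d hd_en hd_opt using fun s n =>
    exists_maxStep_eq (maxVI P q t c f k (k - n)) (hP.2.2 s)
  let greedy : {sch : List (S × A) × S → A → ℝ // IsHR P sch} :=
    ⟨cdSched d, isHR_cdSched hd_en⟩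
  have hlower : maxVI P q t c f k (k + 1) s0 ≤ value q t c f (hrProb P greedy.1 s0) := by
    rw [← sum_range_reward_cdProb_eq_maxVI hd_opt, ← hrProb_cdSched]
    exact sum_range_le_value hq ht hc hf (hHR greedy).1 (hHR greedy).2 (k + 1)
  have : Nonempty {sch : List (S × A) × S → A → ℝ // IsHR P sch} := ⟨greedy⟩
  have hsup_le := ciSup_le hupper
  have hle_sup := hlower.trans (le_ciSup ⟨_, Set.forall_mem_range.2 hupper⟩ greedy)
  have herr := truncationError_lt (t := t) (f := f) hq hc hε hk
  rw [abs_sub_lt_iff]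
  constructor <;> linarith

end TR
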